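/- arXiv:1606.01024 — 2 statements merged into one kernel-verified Lean document; each statement's English description precedes it below -/
import Mathlib

section
/- In the setting of the weighted composition semigroup T on L^p_ρ(Ω), T is stable if and only if the functions ρ_{t,p}/ρ converge to 0 as t → ∞ in the weak-* topology of L^∞ induced by the pairing with L^1 with respect to the measure ρ dλ; equivalently, lim_{t→∞} ∫_Ω |g| ρ_{t,p} dλ = 0 for every g ∈ L^1_ρ(Ω). -/
open MeasureTheory Filter Topology

/-!
Substituting `y = φ(t,x)` turns `‖T(t)f‖ᵖ = ∫_Ω |h_t f(φ(t,·))|ᵖ ρ` into `∫_Ω |f|ᵖ ρ_{t,p}`.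
The substitution needs `|det Dφ(-t,·)| ∘ φ(t,·) = |det Dφ(t,·)|⁻¹`, which holds by the inverse
function theorem wherever `det Dφ(t,·) ≠ 0`, hence almost everywhere on `Ω` by the admissibility
bound and `ρ > 0`. Since `f ↦ |f|ᵖ` maps `Lᵖ_ρ(Ω)` onto the nonnegative functions of `L¹_ρ(Ω)`,
stability is then the same as `∫_Ω |g| ρ_{t,p} → 0` for all `g ∈ L¹_ρ(Ω)`.
-/

/-- The cocycle h_t(x) = exp(∫₀^t h(φ(s,x)) ds). -/
noncomputable def cocycle {E : Type*} (h : E → ℝ) (φ : ℝ → E → E) (t : ℝ) (x : E) : ℝ :=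
  Real.exp (∫ s in (0:ℝ)..t, h (φ s x))

/-- The function ρ_{t,p} = χ_{φ(t,Ω)} |h_t(φ(−t,·))|^p ρ(φ(−t,·)) |det Dφ(−t,·)|. -/
noncomputable def rhotp {N : ℕ} (Ω : Set (EuclideanSpace ℝ (Fin N)))
    (h : EuclideanSpace ℝ (Fin N) → ℝ)
    (φ φinv : ℝ → EuclideanSpace ℝ (Fin N) → EuclideanSpace ℝ (Fin N))
    (ρ : EuclideanSpace ℝ (Fin N) → ℝ) (p t : ℝ) :
    EuclideanSpace ℝ (Fin N) → ℝ :=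
  (φ t '' Ω).indicator fun y =>
    |cocycle h φ t (φinv t y)| ^ p * ρ (φinv t y) * |(fderiv ℝ (φinv t) y).det|

section ChangeOfVariables

variable {E : Type*} [NormedAddCommGroup E] [NormedSpace ℝ E] [FiniteDimensional ℝ E]

theorem det_fderiv_of_leftInverse {f g : E → E} {x : E} (hf : ContDiffAt ℝ 1 f x)
    (hgf : ∀ᶠ y in 𝓝 x, g (f y) = y) (hdet : (fderiv ℝ f x).det ≠ 0) :
    (fderiv ℝ g (f x)).det = (fderiv ℝ f x).det⁻¹ := by
  set e := (fderiv ℝ f x).toContinuousLinearEquivOfDetNeZero hdet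
  have hcoe : (e : E →L[ℝ] E) = fderiv ℝ f x :=
    (fderiv ℝ f x).coe_toContinuousLinearEquivOfDetNeZero hdet
  have hstrict : HasStrictFDerivAt f (e : E →L[ℝ] E) x := by
    rw [hcoe]
    exact hf.hasStrictFDerivAt one_ne_zero
  have hg : fderiv ℝ g (f x) = (e.symm : E →L[ℝ] E) := by
    have hloc : g =ᶠ[𝓝 (f x)] hstrict.localInverse f e x := hstrict.localInverse_unique hgf
    rw [hloc.fderiv_eq]
    exact hstrict.to_localInverse.hasFDerivAt.fderiv
  rw [hg, ContinuousLinearEquiv.det_coe_symm, hcoe]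

variable [MeasurableSpace E] [BorelSpace E] (μ : Measure E) [μ.IsAddHaarMeasure]

theorem setIntegral_comp_mul_eq_setIntegral_mul_indicator {s : Set E} (hs : IsOpen s)
    {f g : E → E} (hmaps : Set.MapsTo f s s) (hinj : Set.InjOn f s) (hf : ContDiffOn ℝ 1 f s)
    (hgf : ∀ x ∈ s, g (f x) = x) (hdet : ∀ᵐ x ∂μ.restrict s, (fderiv ℝ f x).det ≠ 0)
    (F w : E → ℝ) :
    ∫ x in s, F (f x) * w x ∂μ =
      ∫ y in s, F y * (f '' s).indicator (fun y => w (g y) * |(fderiv ℝ g y).det|) y ∂μ := by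
  have hderiv : ∀ x ∈ s, HasFDerivWithinAt f (fderiv ℝ f x) s x := fun x hx =>
    ((hf.contDiffAt (hs.mem_nhds hx)).differentiableAt one_ne_zero).hasFDerivAt.hasFDerivWithinAt
  have himage : MeasurableSet (f '' s) :=
    hs.measurableSet.image_of_continuousOn_injOn hf.continuousOn hinj
  simp_rw [← Set.indicator_mul_right]
  rw [setIntegral_indicator himage, Set.inter_eq_self_of_subset_right hmaps.image_subset,
    integral_image_eq_integral_abs_det_fderiv_smul μ hs.measurableSet hderiv hinj]
  refine integral_congr_ae ?_
  filter_upwards [hdet, ae_restrict_mem hs.measurableSet] with x hx0 hx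
  have hdet_g : |(fderiv ℝ g (f x)).det| = |(fderiv ℝ f x).det|⁻¹ := by
    rw [det_fderiv_of_leftInverse (hf.contDiffAt (hs.mem_nhds hx))
      (eventually_of_mem (hs.mem_nhds hx) hgf) hx0, abs_inv]
  rw [hgf x hx, hdet_g, smul_eq_mul]
  field_simp [abs_ne_zero.2 hx0]

end ChangeOfVariables

theorem forall_rpow_abs_iff_forall_abs {α : Type*} [MeasurableSpace α] {p : ℝ} (hp : p ≠ 0)
    (P : (α → ℝ) → Prop) :
    (∀ f : α → ℝ, Measurable f → P fun x => |f x| ^ p) ↔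
      ∀ g : α → ℝ, Measurable g → P fun x => |g x| := by
  constructor
  · intro H g hg
    have hroot : (fun x => |(|g x| ^ p⁻¹)| ^ p) = fun x => |g x| := funext fun x => by
      rw [abs_of_nonneg (by positivity), ← Real.rpow_mul (abs_nonneg _), inv_mul_cancel₀ hp,
        Real.rpow_one]
    exact hroot ▸ H _ (hg.abs.pow_const _)
  · intro H f hf
    have habs : (fun x => |(|f x| ^ p)|) = fun x => |f x| ^ p :=
      funext fun x => abs_of_nonneg (by positivity)
    exact habs ▸ H _ (hf.abs.pow_const _)

section WeightedComposition

variable {N : ℕ} {Ω : Set (EuclideanSpace ℝ (Fin N))} {p t : ℝ}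
  {φ φinv : ℝ → EuclideanSpace ℝ (Fin N) → EuclideanSpace ℝ (Fin N)}
  {h ρ : EuclideanSpace ℝ (Fin N) → ℝ}

theorem ae_det_fderiv_ne_zero_of_admissible (hΩ : MeasurableSet Ω)
    (hρpos : ∀ x ∈ Ω, 0 < ρ x) {c : ℝ}
    (hadm : ∀ᵐ x ∂(volume.restrict Ω),
      |cocycle h φ t x| ^ p * ρ x ≤ c * ρ (φ t x) * |(fderiv ℝ (φ t) x).det|) :
    ∀ᵐ x ∂(volume.restrict Ω), (fderiv ℝ (φ t) x).det ≠ 0 := by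
  filter_upwards [hadm, ae_restrict_mem hΩ] with x hle hx hdet
  have hpos : 0 < |cocycle h φ t x| ^ p * ρ x :=
    mul_pos (Real.rpow_pos_of_pos (abs_pos.2 (Real.exp_ne_zero _)) p) (hρpos x hx)
  rw [hdet, abs_zero, mul_zero] at hle
  linarith

theorem setIntegral_abs_cocycle_mul_comp_rpow (hΩ : IsOpen Ω)
    (hmaps : Set.MapsTo (φ t) Ω Ω) (hinj : Set.InjOn (φ t) Ω) (hφ : ContDiffOn ℝ 1 (φ t) Ω)
    (hinv : ∀ x ∈ Ω, φinv t (φ t x) = x)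
    (hdet : ∀ᵐ x ∂(volume.restrict Ω), (fderiv ℝ (φ t) x).det ≠ 0)
    (f : EuclideanSpace ℝ (Fin N) → ℝ) :
    ∫ x in Ω, |cocycle h φ t x * f (φ t x)| ^ p * ρ x =
      ∫ y in Ω, |f y| ^ p * rhotp Ω h φ φinv ρ p t y := by
  have hsplit : ∀ x, |cocycle h φ t x * f (φ t x)| ^ p * ρ x =
      |f (φ t x)| ^ p * (|cocycle h φ t x| ^ p * ρ x) := fun x => by
    rw [abs_mul, Real.mul_rpow (abs_nonneg _) (abs_nonneg _)]
    ring
  simp_rw [hsplit]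
  exact setIntegral_comp_mul_eq_setIntegral_mul_indicator volume hΩ hmaps hinj hφ hinv hdet
    (fun y => |f y| ^ p) (fun x => |cocycle h φ t x| ^ p * ρ x)

end WeightedComposition

theorem stmt5_general {N : ℕ} (Ω : Set (EuclideanSpace ℝ (Fin N))) (hΩ : IsOpen Ω)
    (p : ℝ) (hp : 1 ≤ p)
    (φ φinv : ℝ → EuclideanSpace ℝ (Fin N) → EuclideanSpace ℝ (Fin N))
    (h : EuclideanSpace ℝ (Fin N) → ℝ)
    (ρ : EuclideanSpace ℝ (Fin N) → ℝ) (hρpos : ∀ x ∈ Ω, 0 < ρ x)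
    (hφmaps : ∀ t : ℝ, 0 ≤ t → ∀ x ∈ Ω, φ t x ∈ Ω)
    (hφinj : ∀ t : ℝ, 0 ≤ t → Set.InjOn (φ t) Ω)
    (hφC1 : ∀ t : ℝ, 0 ≤ t → ContDiffOn ℝ 1 (φ t) Ω)
    (hinv : ∀ t : ℝ, 0 ≤ t → ∀ x ∈ Ω, φinv t (φ t x) = x)
    (hadm : ∃ M ω : ℝ, 1 ≤ M ∧ ∀ t : ℝ, 0 ≤ t →
      ∀ᵐ x ∂(volume.restrict Ω),
        |cocycle h φ t x| ^ p * ρ x ≤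
          M * Real.exp (ω * t) * ρ (φ t x) * |(fderiv ℝ (φ t) x).det|) :
    (∀ f : EuclideanSpace ℝ (Fin N) → ℝ, Measurable f →
        IntegrableOn (fun x => |f x| ^ p * ρ x) Ω →
        Tendsto (fun t => ∫ x in Ω, |cocycle h φ t x * f (φ t x)| ^ p * ρ x)
          atTop (𝓝 0)) ↔
      (∀ g : EuclideanSpace ℝ (Fin N) → ℝ, Measurable g →
        IntegrableOn (fun x => |g x| * ρ x) Ω →
        Tendsto (fun t => ∫ x in Ω, |g x| * rhotp Ω h φ φinv ρ p t x) atTop (𝓝 0)) := by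
  obtain ⟨M, ω, -, hbound⟩ := hadm
  have hnorm : ∀ t : ℝ, 0 ≤ t → ∀ f : EuclideanSpace ℝ (Fin N) → ℝ,
      ∫ x in Ω, |cocycle h φ t x * f (φ t x)| ^ p * ρ x =
        ∫ y in Ω, |f y| ^ p * rhotp Ω h φ φinv ρ p t y := fun t ht =>
    setIntegral_abs_cocycle_mul_comp_rpow hΩ (hφmaps t ht) (hφinj t ht) (hφC1 t ht) (hinv t ht)
      (ae_det_fderiv_ne_zero_of_admissible hΩ.measurableSet hρpos (hbound t ht))
  refine Iff.trans ?_ (forall_rpow_abs_iff_forall_abs (by linarith : p ≠ 0)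
    fun u => IntegrableOn (fun x => u x * ρ x) Ω →
      Tendsto (fun t => ∫ x in Ω, u x * rhotp Ω h φ φinv ρ p t x) atTop (𝓝 0))
  refine forall_congr' fun f => imp_congr_right fun _ => imp_congr_right fun _ => tendsto_congr' ?_
  filter_upwards [eventually_ge_atTop 0] with t ht
  exact hnorm t ht f

/-- The weighted composition semigroup T on L^p_ρ(Ω) is stable iff ρ_{t,p}/ρ → 0 in the
weak-* topology induced by L¹(ρ dλ); equivalently ∫_Ω |g| ρ_{t,p} dλ → 0 for all g ∈ L¹_ρ(Ω). -/
theorem stmt5 {N : ℕ} (Ω : Set (EuclideanSpace ℝ (Fin N))) (hΩ : IsOpen Ω)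
    (p : ℝ) (hp : 1 ≤ p)
    (φ φinv : ℝ → EuclideanSpace ℝ (Fin N) → EuclideanSpace ℝ (Fin N))
    (h : EuclideanSpace ℝ (Fin N) → ℝ) (hh : ContinuousOn h Ω)
    (ρ : EuclideanSpace ℝ (Fin N) → ℝ) (hρpos : ∀ x ∈ Ω, 0 < ρ x)
    (hρmeas : Measurable ρ)
    (hρloc : ∀ K : Set (EuclideanSpace ℝ (Fin N)), K ⊆ Ω → IsCompact K → IntegrableOn ρ K)
    (hφ0 : ∀ x ∈ Ω, φ 0 x = x)
    (hφmaps : ∀ t : ℝ, 0 ≤ t → ∀ x ∈ Ω, φ t x ∈ Ω)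
    (hφsemi : ∀ s t : ℝ, 0 ≤ s → 0 ≤ t → ∀ x ∈ Ω, φ (s + t) x = φ s (φ t x))
    (hφinj : ∀ t : ℝ, 0 ≤ t → Set.InjOn (φ t) Ω)
    (hφC1 : ∀ t : ℝ, 0 ≤ t → ContDiffOn ℝ 1 (φ t) Ω)
    (hφcont : ContinuousOn (fun q : ℝ × EuclideanSpace ℝ (Fin N) => φ q.1 q.2)
      (Set.Ici 0 ×ˢ Ω))
    (hinv : ∀ t : ℝ, 0 ≤ t → ∀ x ∈ Ω, φinv t (φ t x) = x)
    (hadm : ∃ M ω : ℝ, 1 ≤ M ∧ ∀ t : ℝ, 0 ≤ t →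
      ∀ᵐ x ∂(volume.restrict Ω),
        |cocycle h φ t x| ^ p * ρ x ≤
          M * Real.exp (ω * t) * ρ (φ t x) * |(fderiv ℝ (φ t) x).det|) :
    (∀ f : EuclideanSpace ℝ (Fin N) → ℝ, Measurable f →
        IntegrableOn (fun x => |f x| ^ p * ρ x) Ω →
        Tendsto (fun t => ∫ x in Ω, |cocycle h φ t x * f (φ t x)| ^ p * ρ x)
          atTop (𝓝 0)) ↔
      (∀ g : EuclideanSpace ℝ (Fin N) → ℝ, Measurable g →
        IntegrableOn (fun x => |g x| * ρ x) Ω →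
        Tendsto (fun t => ∫ x in Ω, |g x| * rhotp Ω h φ φinv ρ p t x) atTop (𝓝 0)) :=
  stmt5_general Ω hΩ p hp φ φinv h ρ hρpos hφmaps hφinj hφC1 hinv hadm
end

section
/- Let h ∈ C[0,1] be such that x ↦ (h(x) − h(0))/x belongs to L¹(0,1), and let T_h be the von Foerster–Lasota semigroup (T_h(t)v)(x) = exp(∫_{−t}^0 h(x e^s) ds) v(x e^{−t}) on L^p(0,1), 1 ≤ p < ∞. Then T_h is stable on L^p(0,1) if and only if h(0) ≤ −1/p. -/
/-!
The substitution `u = x e^s` gives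
`∫_{-t}^0 h(x e^s) ds = h(0) t + ∫_{x e^{-t}}^x (h(u) - h(0)) / u du`, so the exponent of
the weight differs from `h(0) t` by at most `M = ∫_0^1 |h(u) - h(0)| / u du`, uniformly in
`t ≥ 0` and `x ∈ (0, 1)`. Rescaling `y = x e^{-t}` then shows that, up to the factors
`e^{± p M}`, `‖T_h(t) v‖_p^p` equals `e^{(p h(0) + 1) t} ∫_0^{e^{-t}} |v|^p`. If
`p h(0) + 1 ≤ 0` this tends to zero by absolute continuity of the integral; otherwise
`v(y) = y^{h(0)}` makes it a positive constant.
-/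

open MeasureTheory Filter Topology Real Set

theorem integral_comp_mul_exp (f : ℝ → ℝ) {x : ℝ} (hx : 0 < x) (a b : ℝ) :
    ∫ s in a..b, f (x * exp s) = ∫ u in x * exp a..x * exp b, f u / u := by
  rw [← intervalIntegral.integral_deriv_smul_comp_of_deriv_nonneg (f := fun s => x * exp s)
    (by fun_prop) (fun s _ => (hasDerivAt_exp s).const_mul x)
    (fun s _ => (mul_pos hx (exp_pos s)).le)]
  refine intervalIntegral.integral_congr fun s _ => ?_
  simp only [Function.comp, smul_eq_mul]
  field_simp [(mul_pos hx (exp_pos s)).ne']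

theorem abs_integral_comp_mul_exp_sub_le {g : ℝ → ℝ} (hg : ContinuousOn g (Ioi 0))
    (hG : IntegrableOn (fun u => (g u - g 0) / u) (Ioo 0 1)) {t x : ℝ} (ht : 0 ≤ t)
    (hx : x ∈ Ioo 0 1) :
    |(∫ s in (-t)..0, g (x * exp s)) - g 0 * t| ≤ ∫ u in Ioo 0 1, |(g u - g 0) / u| := by
  obtain ⟨hx0, hx1⟩ := hx
  have hle : x * exp (-t) ≤ x :=
    mul_le_of_le_one_right hx0.le (exp_le_one_iff.2 (neg_nonpos.2 ht))
  have hsub : (∫ s in (-t)..0, g (x * exp s)) - g 0 * t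
      = ∫ u in x * exp (-t)..x, (g u - g 0) / u := by
    have hcont : Continuous fun s => g (x * exp s) :=
      hg.comp_continuous (by fun_prop) fun s => mul_pos hx0 (exp_pos s)
    have := integral_comp_mul_exp (fun u => g u - g 0) hx0 (-t) 0
    rw [intervalIntegral.integral_sub (hcont.intervalIntegrable _ _) intervalIntegrable_const,
      intervalIntegral.integral_const, exp_zero, mul_one] at this
    simpa [mul_comm] using this
  rw [hsub, intervalIntegral.integral_of_le hle]
  calc |∫ u in Ioc (x * exp (-t)) x, (g u - g 0) / u|
      ≤ ∫ u in Ioc (x * exp (-t)) x, |(g u - g 0) / u| := abs_integral_le_integral_abs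
    _ ≤ ∫ u in Ioo 0 1, |(g u - g 0) / u| :=
      setIntegral_mono_set hG.abs (ae_of_all _ fun u => abs_nonneg _) <| Eventually.of_forall
        fun u hu => ⟨(mul_pos hx0 (exp_pos _)).trans hu.1, hu.2.trans_lt hx1⟩

theorem setIntegral_Ioo_comp_mul_right (f : ℝ → ℝ) {c : ℝ} (hc : 0 < c) :
    ∫ x in Ioo 0 1, f (x * c) = c⁻¹ * ∫ y in Ioc 0 c, f y := by
  rw [← integral_Ioc_eq_integral_Ioo, ← intervalIntegral.integral_of_le zero_le_one,
    intervalIntegral.integral_comp_mul_right f hc.ne', smul_eq_mul, zero_mul, one_mul,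
    intervalIntegral.integral_of_le hc.le]

theorem MeasureTheory.IntegrableOn.comp_mul_right_Ioo {f : ℝ → ℝ} {c : ℝ} (hc : 0 < c)
    (hf : IntegrableOn f (Ioc 0 c)) : IntegrableOn (fun x => f (x * c)) (Ioo 0 1) := by
  have := ((intervalIntegrable_iff_integrableOn_Ioc_of_le hc.le).2 hf).comp_mul_right (c := c)
  rw [zero_div, div_self hc.ne', intervalIntegrable_iff_integrableOn_Ioc_of_le zero_le_one] at this
  exact this.mono_set Ioo_subset_Ioc_self

theorem tendsto_setIntegral_Ioc_exp_neg {f : ℝ → ℝ} (hf : IntegrableOn f (Ioc 0 1)) :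
    Tendsto (fun t => ∫ y in Ioc 0 (exp (-t)), f y) atTop (𝓝 0) := by
  have hprim : Tendsto (fun c => ∫ y in (0 : ℝ)..c, f y) (𝓝[uIcc 0 1] 0) (𝓝 0) := by
    have := intervalIntegral.continuousOn_primitive_interval (μ := volume) (f := f) (a := 0)
      (b := 1) (by rwa [uIcc_of_le zero_le_one, integrableOn_Icc_iff_integrableOn_Ioc])
    simpa using (this 0 left_mem_uIcc).tendsto
  have hexp : Tendsto (fun t => exp (-t)) atTop (𝓝[uIcc 0 1] 0) := by
    refine tendsto_nhdsWithin_iff.2 ⟨tendsto_exp_neg_atTop_nhds_zero, ?_⟩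
    filter_upwards [eventually_ge_atTop 0] with t ht
    rw [uIcc_of_le zero_le_one]
    exact ⟨(exp_pos _).le, exp_le_one_iff.2 (neg_nonpos.2 ht)⟩
  refine (hprim.comp hexp).congr fun t => ?_
  exact intervalIntegral.integral_of_le (exp_pos _).le

theorem setIntegral_Ioc_rpow {r : ℝ} (hr : -1 < r) {c : ℝ} (hc : 0 ≤ c) :
    ∫ y in Ioc 0 c, y ^ r = c ^ (r + 1) / (r + 1) := by
  rw [← intervalIntegral.integral_of_le hc, integral_rpow (Or.inl hr),
    zero_rpow (by linarith : r + 1 ≠ 0), sub_zero]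

noncomputable def vonFoersterLasota (h : ℝ → ℝ) (t : ℝ) (v : ℝ → ℝ) (x : ℝ) : ℝ :=
  exp (∫ s in (-t)..0, h (x * exp s)) * v (x * exp (-t))

section

variable {g h v : ℝ → ℝ} {p t c M : ℝ}

theorem vonFoersterLasota_congr (hgh : EqOn g h (Icc 0 1)) (ht : 0 ≤ t) {x : ℝ}
    (hx : x ∈ Icc 0 1) : vonFoersterLasota g t v x = vonFoersterLasota h t v x := by
  rw [vonFoersterLasota, vonFoersterLasota, intervalIntegral.integral_congr fun s hs => ?_]
  rw [uIcc_of_le (neg_nonpos.2 ht)] at hs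
  exact hgh ⟨mul_nonneg hx.1 (exp_pos s).le,
    mul_le_one₀ hx.2 (exp_pos s).le (exp_le_one_iff.2 hs.2)⟩

theorem measurable_vonFoersterLasota (hg : Continuous g) (hv : Measurable v) (t : ℝ) :
    Measurable (vonFoersterLasota g t v) := by
  have : Continuous fun x => ∫ s in (-t)..0, g (x * exp s) :=
    intervalIntegral.continuous_parametric_intervalIntegral_of_continuous' (by fun_prop) _ _
  exact (continuous_exp.comp this).measurable.mul (hv.comp (measurable_id.mul_const _))

theorem abs_vonFoersterLasota_rpow (x : ℝ) : |vonFoersterLasota g t v x| ^ p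
    = exp (p * ∫ s in (-t)..0, g (x * exp s)) * |v (x * exp (-t))| ^ p := by
  rw [vonFoersterLasota, abs_mul, abs_exp, mul_rpow (exp_pos _).le (abs_nonneg _), ← exp_mul,
    mul_comm _ p]

theorem abs_vonFoersterLasota_rpow_le (hp : 0 ≤ p) {x : ℝ}
    (hx : |(∫ s in (-t)..0, g (x * exp s)) - c * t| ≤ M) :
    |vonFoersterLasota g t v x| ^ p ≤ exp (p * (c * t + M)) * |v (x * exp (-t))| ^ p := by
  rw [abs_vonFoersterLasota_rpow]
  gcongr
  linarith [(abs_le.1 hx).2]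

theorem le_abs_vonFoersterLasota_rpow (hp : 0 ≤ p) {x : ℝ}
    (hx : |(∫ s in (-t)..0, g (x * exp s)) - c * t| ≤ M) :
    exp (p * (c * t - M)) * |v (x * exp (-t))| ^ p ≤ |vonFoersterLasota g t v x| ^ p := by
  rw [abs_vonFoersterLasota_rpow]
  gcongr
  linarith [(abs_le.1 hx).1]

theorem setIntegral_abs_vonFoersterLasota_rpow_le (hp : 0 ≤ p) (ht : 0 ≤ t)
    (hΦ : ∀ x ∈ Ioo (0 : ℝ) 1, |(∫ s in (-t)..0, g (x * exp s)) - c * t| ≤ M)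
    (hv : IntegrableOn (fun y => |v y| ^ p) (Ioc 0 1)) :
    ∫ x in Ioo 0 1, |vonFoersterLasota g t v x| ^ p
      ≤ exp (p * M) * exp ((p * c + 1) * t) * ∫ y in Ioc 0 (exp (-t)), |v y| ^ p := by
  have hv' := hv.mono_set (Ioc_subset_Ioc_right (exp_le_one_iff.2 (neg_nonpos.2 ht)))
  calc ∫ x in Ioo 0 1, |vonFoersterLasota g t v x| ^ p
      ≤ ∫ x in Ioo 0 1, exp (p * (c * t + M)) * |v (x * exp (-t))| ^ p :=
        integral_mono_of_nonneg (ae_of_all _ fun x => by positivity)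
          ((hv'.comp_mul_right_Ioo (exp_pos _)).const_mul _)
          ((ae_restrict_iff' measurableSet_Ioo).2 <| ae_of_all _ fun x hx =>
            abs_vonFoersterLasota_rpow_le hp (hΦ x hx))
    _ = exp (p * M) * exp ((p * c + 1) * t) * ∫ y in Ioc 0 (exp (-t)), |v y| ^ p := by
      rw [integral_const_mul, setIntegral_Ioo_comp_mul_right (fun y => |v y| ^ p) (exp_pos _),
        ← exp_neg, neg_neg, ← mul_assoc, ← exp_add, ← exp_add]
      ring_nf

theorem le_setIntegral_abs_vonFoersterLasota_rpow (hg : Continuous g) (hp : 0 ≤ p) (ht : 0 ≤ t)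
    (hΦ : ∀ x ∈ Ioo (0 : ℝ) 1, |(∫ s in (-t)..0, g (x * exp s)) - c * t| ≤ M)
    (hvm : Measurable v) (hv : IntegrableOn (fun y => |v y| ^ p) (Ioc 0 1)) :
    exp (-(p * M)) * exp ((p * c + 1) * t) * ∫ y in Ioc 0 (exp (-t)), |v y| ^ p
      ≤ ∫ x in Ioo 0 1, |vonFoersterLasota g t v x| ^ p := by
  have hv' := hv.mono_set (Ioc_subset_Ioc_right (exp_le_one_iff.2 (neg_nonpos.2 ht)))
  have hint : IntegrableOn (fun x => |vonFoersterLasota g t v x| ^ p) (Ioo 0 1) :=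
    Integrable.mono' ((hv'.comp_mul_right_Ioo (exp_pos _)).const_mul (exp (p * (c * t + M))))
      ((measurable_vonFoersterLasota hg hvm t).abs.pow_const p).aestronglyMeasurable
      ((ae_restrict_iff' measurableSet_Ioo).2 <| ae_of_all _ fun x hx => by
        rw [Real.norm_of_nonneg (by positivity)]
        exact abs_vonFoersterLasota_rpow_le hp (hΦ x hx))
  calc exp (-(p * M)) * exp ((p * c + 1) * t) * ∫ y in Ioc 0 (exp (-t)), |v y| ^ p
      = ∫ x in Ioo 0 1, exp (p * (c * t - M)) * |v (x * exp (-t))| ^ p := by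
        rw [integral_const_mul, setIntegral_Ioo_comp_mul_right (fun y => |v y| ^ p) (exp_pos _),
          ← exp_neg, neg_neg, ← mul_assoc, ← exp_add, ← exp_add]
        ring_nf
    _ ≤ ∫ x in Ioo 0 1, |vonFoersterLasota g t v x| ^ p :=
      setIntegral_mono_on ((hv'.comp_mul_right_Ioo (exp_pos _)).const_mul _) hint
        measurableSet_Ioo fun x hx => le_abs_vonFoersterLasota_rpow hp (hΦ x hx)

end

def VonFoersterLasotaStable (p : ℝ) (h : ℝ → ℝ) : Prop :=
  ∀ v : ℝ → ℝ, Measurable v → IntegrableOn (fun x => |v x| ^ p) (Ioo 0 1) →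
    Tendsto (fun t => ∫ x in Ioo 0 1, |vonFoersterLasota h t v x| ^ p) atTop (𝓝 0)

section

variable {g h : ℝ → ℝ} {p : ℝ}

theorem vonFoersterLasotaStable_congr (hgh : EqOn g h (Icc 0 1)) :
    VonFoersterLasotaStable p g ↔ VonFoersterLasotaStable p h := by
  refine forall₂_congr fun v _ => forall_congr' fun _ => tendsto_congr' ?_
  filter_upwards [eventually_ge_atTop 0] with t ht
  refine setIntegral_congr_fun measurableSet_Ioo fun x hx => ?_
  simp only [vonFoersterLasota_congr hgh ht (Ioo_subset_Icc_self hx)]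

theorem vonFoersterLasotaStable_of_le (hp : 0 < p) (hg : Continuous g)
    (hG : IntegrableOn (fun u => (g u - g 0) / u) (Ioo 0 1)) (h0 : p * g 0 + 1 ≤ 0) :
    VonFoersterLasotaStable p g := by
  intro v _ hv
  rw [← integrableOn_Ioc_iff_integrableOn_Ioo] at hv
  set M := ∫ u in Ioo 0 1, |(g u - g 0) / u|
  have hlim := (tendsto_setIntegral_Ioc_exp_neg hv).const_mul (exp (p * M))
  rw [mul_zero] at hlim
  refine squeeze_zero' (Eventually.of_forall fun t => setIntegral_nonneg measurableSet_Ioo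
    fun x _ => by positivity) ?_ hlim
  filter_upwards [eventually_ge_atTop 0] with t ht
  have hI : 0 ≤ ∫ y in Ioc 0 (exp (-t)), |v y| ^ p :=
    setIntegral_nonneg measurableSet_Ioc fun y _ => by positivity
  calc ∫ x in Ioo 0 1, |vonFoersterLasota g t v x| ^ p
      ≤ exp (p * M) * exp ((p * g 0 + 1) * t) * ∫ y in Ioc 0 (exp (-t)), |v y| ^ p :=
        setIntegral_abs_vonFoersterLasota_rpow_le hp.le ht
          (fun x hx => abs_integral_comp_mul_exp_sub_le hg.continuousOn hG ht hx) hv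
    _ ≤ exp (p * M) * ∫ y in Ioc 0 (exp (-t)), |v y| ^ p := by
        rw [mul_assoc]
        gcongr
        exact mul_le_of_le_one_left hI (exp_le_one_iff.2 (mul_nonpos_of_nonpos_of_nonneg h0 ht))

theorem not_vonFoersterLasotaStable_of_lt (hp : 0 < p) (hg : Continuous g)
    (hG : IntegrableOn (fun u => (g u - g 0) / u) (Ioo 0 1)) (h0 : -1 < p * g 0) :
    ¬ VonFoersterLasotaStable p g := by
  set M := ∫ u in Ioo 0 1, |(g u - g 0) / u|
  -- `v y = y ^ g 0` makes the lower bound independent of `t`.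
  let v : ℝ → ℝ := fun y => |y| ^ g 0
  have hv_rpow : ∀ y ∈ Ioc (0 : ℝ) 1, y ^ (p * g 0) = |v y| ^ p := fun y hy => by
    simp only [v]
    rw [abs_of_nonneg (by positivity), abs_of_pos hy.1, ← rpow_mul hy.1.le, mul_comm]
  have hvm : Measurable v := measurable_id.abs.pow_const _
  have hv : IntegrableOn (fun y => |v y| ^ p) (Ioc 0 1) :=
    (((intervalIntegrable_iff_integrableOn_Ioc_of_le zero_le_one).1
      (intervalIntegral.intervalIntegrable_rpow' h0)).congr_fun hv_rpow measurableSet_Ioc)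
  have hlow : ∀ t, 0 ≤ t →
      exp (-(p * M)) / (p * g 0 + 1) ≤ ∫ x in Ioo 0 1, |vonFoersterLasota g t v x| ^ p := by
    intro t ht
    refine le_of_eq_of_le ?_ (le_setIntegral_abs_vonFoersterLasota_rpow hg hp.le ht
      (fun x hx => abs_integral_comp_mul_exp_sub_le hg.continuousOn hG ht hx) hvm hv)
    have hsub : Ioc 0 (exp (-t)) ⊆ Ioc 0 1 :=
      Ioc_subset_Ioc_right (exp_le_one_iff.2 (neg_nonpos.2 ht))
    rw [← setIntegral_congr_fun measurableSet_Ioc fun y hy => hv_rpow y (hsub hy),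
      setIntegral_Ioc_rpow h0 (exp_pos _).le, ← exp_mul, mul_div_assoc', mul_assoc, ← exp_add,
      show (p * g 0 + 1) * t + -t * (p * g 0 + 1) = 0 by ring, exp_zero, mul_one]
  have hpos : 0 < exp (-(p * M)) / (p * g 0 + 1) := div_pos (exp_pos _) (by linarith)
  intro hst
  obtain ⟨t, hlt, ht⟩ := (((hst v hvm (hv.mono_set Ioo_subset_Ioc_self)).eventually
    (gt_mem_nhds hpos)).and (eventually_ge_atTop 0)).exists
  exact (hlow t ht).not_gt hlt

theorem vonFoersterLasotaStable_iff (hp : 0 < p) (hg : Continuous g)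
    (hG : IntegrableOn (fun u => (g u - g 0) / u) (Ioo 0 1)) :
    VonFoersterLasotaStable p g ↔ g 0 ≤ -(1 / p) := by
  rw [← neg_div, le_div_iff₀ hp]
  constructor
  · intro hst
    by_contra! hlt
    exact not_vonFoersterLasotaStable_of_lt hp hg hG (by linarith) hst
  · intro hle
    exact vonFoersterLasotaStable_of_le hp hg hG (by linarith)

end

/-- Stability of the von Foerster–Lasota semigroup
(T_h(t)v)(x) = exp(∫_{−t}^0 h(xe^s) ds) v(xe^{−t}) on L^p(0,1):
if (h(x)−h(0))/x ∈ L¹(0,1), then T_h is stable iff h(0) ≤ −1/p. -/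
theorem stmt12 (p : ℝ) (hp : 1 ≤ p) (h : ℝ → ℝ) (hh : ContinuousOn h (Set.Icc 0 1))
    (hint : IntegrableOn (fun x => (h x - h 0) / x) (Set.Ioo 0 1)) :
    (∀ v : ℝ → ℝ, Measurable v → IntegrableOn (fun x => |v x| ^ p) (Set.Ioo 0 1) →
        Tendsto (fun t => ∫ x in Set.Ioo (0:ℝ) 1,
            |Real.exp (∫ s in (-t)..(0:ℝ), h (x * Real.exp s)) * v (x * Real.exp (-t))| ^ p)
          atTop (𝓝 0)) ↔
      h 0 ≤ -(1 / p) := by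
  obtain ⟨g, hg, hgh⟩ : ∃ g, Continuous g ∧ EqOn g h (Icc 0 1) :=
    ⟨IccExtend zero_le_one ((Icc 0 1).domRestrict h), hh.domRestrict.Icc_extend',
      fun x hx => IccExtend_of_mem _ _ hx⟩
  have hg0 : g 0 = h 0 := hgh (left_mem_Icc.2 zero_le_one)
  have hG : IntegrableOn (fun x => (g x - g 0) / x) (Ioo 0 1) :=
    hint.congr_fun (fun x hx => by rw [hgh (Ioo_subset_Icc_self hx), hg0]) measurableSet_Ioo
  change VonFoersterLasotaStable p h ↔ _
  rw [← vonFoersterLasotaStable_congr hgh, ← hg0]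
  exact vonFoersterLasotaStable_iff (by linarith) hg hG
end
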